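/- arXiv:2206.06000 — 2 statements merged into one kernel-verified Lean document; each statement's English description precedes it below -/
import Mathlib

section
/- Let H be a finite dimensional Hopf algebra over a field k, and let t ∈ H be a nonzero left integral (i.e., h·t = ε(h)·t for all h ∈ H). Then there exists a unique algebra homomorphism α : H → k (equivalently, a group-like element of H*) such that t·h = α(h)·t for all h ∈ H. The Hopf algebra H is unimodular (t is also a right integral) if and only if α = ε. -/
open Coalgebra TensorProduct HopfAlgebra

set_option linter.unusedSectionVars false

variable {k H : Type} [Field k] [Ring H] [HopfAlgebra k H] [FiniteDimensional k H]

noncomputable def lapp {W : Type} [AddCommGroup W] [Module k W]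
    (f : Module.Dual k H) : H ⊗[k] W →ₗ[k] W :=
  (TensorProduct.lid k W).toLinearMap ∘ₗ f.rTensor W

@[simp] lemma lapp_tmul {W : Type} [AddCommGroup W] [Module k W]
    (f : Module.Dual k H) (x : H) (y : W) : lapp f (x ⊗ₜ y) = f x • y := rfl

noncomputable def bb : Module.Basis (Fin (Module.finrank k H)) k H := Module.finBasis k H

lemma expand {W : Type} [AddCommGroup W] [Module k W] (z : H ⊗[k] W) :
    z = ∑ i, (bb (k := k) (H := H) i) ⊗ₜ lapp (bb.coord i) z := by
  have : (LinearMap.id : H ⊗[k] W →ₗ[k] H ⊗[k] W)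
      = ∑ i, (TensorProduct.mk k H W (bb i)) ∘ₗ (lapp (bb.coord i)) := by
    apply TensorProduct.ext'
    intro x y
    simp only [LinearMap.id_apply, LinearMap.sum_apply, LinearMap.comp_apply, lapp_tmul,
      mk_apply, tmul_smul, smul_tmul']
    rw [← TensorProduct.sum_tmul]
    congr 1
    simp [Module.Basis.coord_apply, Module.Basis.sum_repr]
  conv_lhs => rw [← LinearMap.id_apply (R := k) z, this]
  simp

-- counit-smul contractions
lemma sum_counit_smul_right {a : H} {ι : Type*} (r : Repr k a ι) :
    ∑ i ∈ r.index, counit (R := k) (r.left i) • r.right i = a := by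
  have h := congrArg (TensorProduct.lid k H) (sum_counit_tmul_eq (R := k) r)
  rw [map_sum] at h
  simp only [TensorProduct.lid_tmul, one_smul] at h
  exact h

lemma sum_counit_smul_left {a : H} {ι : Type*} (r : Repr k a ι) :
    ∑ i ∈ r.index, counit (R := k) (r.right i) • r.left i = a := by
  have h := congrArg (TensorProduct.rid k H) (sum_tmul_counit_eq (R := k) r)
  rw [map_sum] at h
  simp only [TensorProduct.rid_tmul, one_smul] at h
  exact h

noncomputable def G : H ⊗[k] (H ⊗[k] H) →ₗ[k] H ⊗[k] H :=
  ((LinearMap.mul' k H) ∘ₗ (antipode (R := k) (A := H)).rTensor H).rTensor H ∘ₗ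
    (TensorProduct.assoc k H H H).symm.toLinearMap

@[simp] lemma G_tmul (x y z : H) :
    G (x ⊗ₜ[k] (y ⊗ₜ[k] z)) = (antipode (R := k) x * y) ⊗ₜ[k] z := rfl

lemma dagger (a : H) {ι κ : Type*} (r : Repr k a ι) (rr : ∀ i : ι, Repr k (r.right i) κ) :
    ∑ i ∈ r.index, ∑ j ∈ (rr i).index,
      (antipode (R := k) (r.left i) * (rr i).left j) ⊗ₜ[k] (rr i).right j
    = (1 : H) ⊗ₜ[k] a := by
  have key := congrArg G (sum_tmul_tmul_eq (R := k) r (fun i => ℛ k (r.left i)) rr)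
  rw [map_sum, map_sum] at key
  simp only [map_sum, G_tmul] at key
  rw [← key]
  have : ∀ i ∈ r.index,
      ∑ j ∈ (ℛ k (r.left i)).index,
        (antipode (R := k) ((ℛ k (r.left i)).left j) * (ℛ k (r.left i)).right j) ⊗ₜ[k] r.right i
      = counit (R := k) (r.left i) • ((1:H) ⊗ₜ[k] r.right i) := by
    intro i _
    rw [← TensorProduct.sum_tmul, sum_antipode_mul_eq_smul, smul_tmul']
  rw [Finset.sum_congr rfl this]
  simp only [← tmul_smul]
  rw [← TensorProduct.tmul_sum, sum_counit_smul_right r]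

lemma lemB (t : H) (hleft : ∀ h : H, h * t = counit (R := k) h • t) (a : H) :
    ((1:H) ⊗ₜ[k] a) * comul (R := k) t
      = ((antipode (R := k) a) ⊗ₜ[k] (1:H)) * comul (R := k) t := by
  set r := ℛ k a with hr
  set rr := fun i => ℛ k (r.right i) with hrr
  calc ((1:H) ⊗ₜ[k] a) * comul (R := k) t
      = (∑ i ∈ r.index, ∑ j ∈ (rr i).index,
          (antipode (R := k) (r.left i) * (rr i).left j) ⊗ₜ[k] (rr i).right j)
          * comul (R := k) t := by rw [dagger a r rr]
    _ = ∑ i ∈ r.index, (antipode (R := k) (r.left i) ⊗ₜ[k] (1:H)) *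
          ((∑ j ∈ (rr i).index, (rr i).left j ⊗ₜ[k] (rr i).right j) * comul (R := k) t) := by
        simp only [Finset.sum_mul, Finset.mul_sum, ← mul_assoc,
          Algebra.TensorProduct.tmul_mul_tmul, one_mul]
    _ = ∑ i ∈ r.index, (antipode (R := k) (r.left i) ⊗ₜ[k] (1:H)) *
          (counit (R := k) (r.right i) • comul (R := k) t) := by
        apply Finset.sum_congr rfl; intro i _
        rw [(rr i).eq, ← Bialgebra.comul_mul, hleft, map_smul]
    _ = ((antipode (R := k) a) ⊗ₜ[k] (1:H)) * comul (R := k) t := by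
        simp only [mul_smul_comm, ← smul_mul_assoc]
        rw [← Finset.sum_mul]
        congr 1
        simp only [smul_tmul']
        rw [← TensorProduct.sum_tmul]
        congr 1
        simp only [← map_smul]
        rw [← map_sum, sum_counit_smul_left r]

section Core
variable (t : H) (hleft : ∀ h : H, h * t = counit (R := k) h • t)

noncomputable def ww : Fin (Module.finrank k H) → H :=
  fun i => lapp (bb.coord i) (comul (R := k) t)

lemma hz : comul (R := k) t = ∑ i, (bb (k := k) (H := H) i) ⊗ₜ[k] ww (k := k) t i := expand _

lemma coord_sum_eq {W : Type} [AddCommGroup W] [Module k W]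
    (v : Fin (Module.finrank k H) → W) (i₀ : Fin (Module.finrank k H)) :
    ∑ i, (bb (k := k) (H := H)).coord i₀ (bb i) • v i = v i₀ := by
  rw [Finset.sum_eq_single i₀]
  · simp [Module.Basis.coord_apply, Module.Basis.repr_self]
  · intro i _ hne
    simp [Module.Basis.coord_apply, Module.Basis.repr_self, Finsupp.single_apply_eq_zero, hne,
      Ne.symm hne]
  · simp

include hleft

-- coordinate form of lemma B
lemma E1 (ω : Module.Dual k H) (a : H) :
    ∑ i, ω (bb i) • (a * ww (k := k) t i)
      = ∑ i, ω (antipode (R := k) a * bb i) • ww (k := k) t i := by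
  have h := lemB t hleft a
  rw [hz t, Finset.mul_sum, Finset.mul_sum] at h
  simp_rw [Algebra.TensorProduct.tmul_mul_tmul, one_mul] at h
  have h2 := congrArg (lapp (W := H) ω) h
  rw [map_sum, map_sum] at h2
  simpa only [lapp_tmul] using h2

def PP : Submodule k H := Submodule.span k (Set.range (ww (k := k) t))

lemma mul_ww_mem (a : H) (i₀ : Fin (Module.finrank k H)) : a * ww (k := k) t i₀ ∈ PP (k := k) t := by
  have h := E1 (k := k) t hleft (bb.coord i₀) a
  rw [coord_sum_eq (fun i => a * ww (k := k) t i) i₀] at h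
  rw [h]
  exact Submodule.sum_smul_mem _ _ fun i _ => Submodule.subset_span ⟨i, rfl⟩

lemma mul_mem_PP (a : H) {x : H} (hx : x ∈ PP (k := k) t) : a * x ∈ PP (k := k) t := by
  induction hx using Submodule.span_induction with
  | mem y hy => obtain ⟨i, rfl⟩ := hy; exact mul_ww_mem t hleft a i
  | zero => simpa using (PP (k := k) t).zero_mem
  | add y z _ _ hy hz => rw [mul_add]; exact (PP (k := k) t).add_mem hy hz
  | smul c y _ hy => rw [mul_smul_comm]; exact (PP (k := k) t).smul_mem c hy

end Core

section Core2
variable (t : H) (hleft : ∀ h : H, h * t = counit (R := k) h • t)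

noncomputable def rappH (f : Module.Dual k H) : H ⊗[k] H →ₗ[k] H :=
  (TensorProduct.rid k H).toLinearMap ∘ₗ f.lTensor H

@[simp] lemma rappH_tmul (f : Module.Dual k H) (x y : H) :
    rappH f (x ⊗ₜ y) = f y • x := by
  simp [rappH]

lemma t_expand : t = ∑ i, counit (R := k) (ww (k := k) t i) • bb i := by
  have h := congrArg (rappH (k := k) counit) (hz (k := k) t)
  rw [map_sum] at h
  simp only [rappH_tmul] at h
  rw [← h]
  simp [rappH, Coalgebra.lTensor_counit_comul]

def QQ : Submodule k (H ⊗[k] H) :=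
  Submodule.span k {x : H ⊗[k] H | ∃ c j, x = c ⊗ₜ[k] ww (k := k) t j}

include hleft

lemma comul_ww_mem (i₀ : Fin (Module.finrank k H)) :
    comul (R := k) (ww (k := k) t i₀) ∈ QQ (k := k) t := by
  have hco := Coalgebra.coassoc_apply (R := k) t
  rw [hz (k := k) t, map_sum, map_sum, map_sum] at hco
  simp only [LinearMap.rTensor_tmul, LinearMap.lTensor_tmul, map_sum] at hco
  have h2 := congrArg (lapp (W := H ⊗[k] H) (bb.coord i₀)) hco
  rw [map_sum, map_sum] at h2
  simp only [lapp_tmul] at h2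
  rw [coord_sum_eq (fun i => comul (R := k) (ww (k := k) t i)) i₀] at h2
  rw [← h2]
  apply Submodule.sum_mem
  intro j _
  rw [← (ℛ k (bb (k := k) (H := H) j)).eq]
  rw [TensorProduct.sum_tmul, map_sum, map_sum]
  apply Submodule.sum_mem
  intro l _
  rw [TensorProduct.assoc_tmul, lapp_tmul]
  exact Submodule.smul_mem _ _ (Submodule.subset_span ⟨_, j, rfl⟩)

lemma one_mem_PP (ht : t ≠ 0) : (1 : H) ∈ PP (k := k) t := by
  have hex : ∃ i, counit (R := k) (ww (k := k) t i) ≠ 0 := by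
    by_contra hc
    push_neg at hc
    apply ht
    rw [t_expand (k := k) t]
    simp [hc]
  obtain ⟨i, hi⟩ := hex
  have hg : ∀ x ∈ QQ (k := k) t,
      LinearMap.mul' k H ((antipode (R := k) (A := H)).rTensor H x) ∈ PP (k := k) t := by
    intro x hx
    induction hx using Submodule.span_induction with
    | mem y hy =>
        obtain ⟨c, j, rfl⟩ := hy
        simpa using mul_ww_mem (k := k) t hleft (antipode (R := k) c) j
    | zero => simpa using (PP (k := k) t).zero_mem
    | add y z _ _ hy hz => rw [map_add, map_add]; exact (PP (k := k) t).add_mem hy hz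
    | smul c y _ hy => rw [map_smul, map_smul]; exact (PP (k := k) t).smul_mem c hy
  have h1 := hg _ (comul_ww_mem (k := k) t hleft i)
  rw [mul_antipode_rTensor_comul_apply, Algebra.algebraMap_eq_smul_one] at h1
  have := (PP (k := k) t).smul_mem (counit (R := k) (ww (k := k) t i))⁻¹ h1
  rwa [smul_smul, inv_mul_cancel₀ hi, one_smul] at this

lemma mem_PP (x : H) (ht : t ≠ 0) : x ∈ PP (k := k) t := by
  have := mul_mem_PP (k := k) t hleft x (one_mem_PP (k := k) t hleft ht)
  simpa using this

lemma exists_lam (ht : t ≠ 0) : ∃ lam : Module.Dual k H,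
    ∑ i, lam (bb i) • ww (k := k) t i = 1 := by
  have h1 := mem_PP (k := k) t hleft 1 ht
  rw [PP, Submodule.mem_span_range_iff_exists_fun] at h1
  obtain ⟨c, hc⟩ := h1
  refine ⟨∑ j, c j • bb.coord j, ?_⟩
  have : ∀ i, (∑ j, c j • (bb (k := k) (H := H)).coord j) (bb i) = c i := by
    intro i
    rw [LinearMap.sum_apply, Finset.sum_eq_single i]
    · simp [Module.Basis.coord_apply, Module.Basis.repr_self]
    · intro j _ hne
      simp [Module.Basis.coord_apply, Module.Basis.repr_self, Finsupp.single_apply_eq_zero, Ne.symm hne]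
    · simp
  simp_rw [this]
  exact hc

lemma diamond (lam : Module.Dual k H)
    (hlam : ∑ i, lam (bb i) • ww (k := k) t i = 1) (a : H) :
    ∑ i, lam (antipode (R := k) a * bb i) • ww (k := k) t i = a := by
  have h := E1 (k := k) t hleft lam a
  rw [← h]
  simp_rw [← mul_smul_comm]
  rw [← Finset.mul_sum, hlam, mul_one]

lemma antipode_injective (ht : t ≠ 0) :
    Function.Injective (antipode (R := k) (A := H)) := by
  obtain ⟨lam, hlam⟩ := exists_lam (k := k) t hleft ht
  have hzero : ∀ a : H, antipode (R := k) a = 0 → a = 0 := by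
    intro a ha
    have := diamond (k := k) t hleft lam hlam a
    rw [ha] at this
    simp at this
    exact this.symm
  intro x y hxy
  have : x - y = 0 := hzero _ (by rw [map_sub, hxy, sub_self])
  exact sub_eq_zero.mp this

end Core2


section General

lemma counit_antipode (a : H) :
    counit (R := k) (antipode (R := k) a) = counit (R := k) a := by
  have h := congrArg (counit (R := k)) (sum_antipode_mul_eq_smul (ℛ k a))
  rw [map_sum, map_smul] at h
  simp only [Bialgebra.counit_mul, Bialgebra.counit_one, smul_eq_mul, mul_one] at h
  have h3 : counit (R := k) (antipode (R := k) a)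
      = ∑ i ∈ (ℛ k a).index, counit (R := k) ((ℛ k a).right i) *
          counit (R := k) (antipode (R := k) ((ℛ k a).left i)) := by
    conv_lhs => rw [← sum_counit_smul_left (ℛ k a)]
    rw [map_sum, map_sum]
    simp only [map_smul, smul_eq_mul]
  rw [h3, ← h]
  exact Finset.sum_congr rfl fun i _ => mul_comm _ _

lemma antipode_one' : antipode (R := k) (A := H) 1 = 1 := by
  have h := mul_antipode_rTensor_comul_apply (R := k) (a := (1:H))
  rw [Bialgebra.comul_one, Algebra.TensorProduct.one_def] at h
  simpa using h

noncomputable def F3 (c1 c2 c3 : H) : H ⊗[k] H →ₗ[k] H :=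
  TensorProduct.lift (LinearMap.mk₂ k
    (fun u v => c1 * u * (c2 * antipode (R := k) (v * c3)))
    (fun u u' v => by simp [add_mul, mul_add])
    (fun s u v => by simp [smul_mul_assoc, mul_smul_comm])
    (fun u v v' => by simp [add_mul, map_add, mul_add])
    (fun s u v => by simp [smul_mul_assoc, map_smul, mul_smul_comm]))

@[simp] lemma F3_tmul (c1 c2 c3 u v : H) :
    F3 (k := k) c1 c2 c3 (u ⊗ₜ v) = c1 * u * (c2 * antipode (R := k) (v * c3)) := rfl

noncomputable def G3 (c : H) : H ⊗[k] H →ₗ[k] H :=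
  TensorProduct.lift (LinearMap.mk₂ k (fun u v => u * antipode (R := k) (c * v))
    (fun u u' v => by simp [add_mul])
    (fun s u v => by simp [smul_mul_assoc])
    (fun u v v' => by simp [mul_add, map_add])
    (fun s u v => by simp [mul_smul_comm, map_smul]))

@[simp] lemma G3_tmul (c u v : H) :
    G3 (k := k) c (u ⊗ₜ v) = u * antipode (R := k) (c * v) := rfl

theorem antipode_mul' (x y : H) :
    antipode (R := k) (x * y) = antipode (R := k) y * antipode (R := k) x := by
  set r := ℛ k x with hr
  set q := ℛ k y with hq
  set rr : ∀ i : H × H, Repr k (r.right i) (H × H) := fun i => ℛ k (r.right i) with hrrdef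
  set qq : ∀ j : H × H, Repr k (q.right j) (H × H) := fun j => ℛ k (q.right j) with hqqdef
  set X : H := ∑ j ∈ q.index, ∑ i ∈ r.index,
    antipode (R := k) (q.left j) * antipode (R := k) (r.left i) *
      LinearMap.mul' k H ((antipode (R := k) (A := H)).lTensor H
        (comul (R := k) (r.right i) * comul (R := k) (q.right j))) with hX
  have hA : X = antipode (R := k) y * antipode (R := k) x := by
    have hSy : ∑ j ∈ q.index, counit (R := k) (q.right j) • antipode (R := k) (q.left j)
        = antipode (R := k) y := by
      simp only [← map_smul]
      rw [← map_sum, sum_counit_smul_left q]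
    have hSx : ∑ i ∈ r.index, counit (R := k) (r.right i) • antipode (R := k) (r.left i)
        = antipode (R := k) x := by
      simp only [← map_smul]
      rw [← map_sum, sum_counit_smul_left r]
    rw [hX, ← hSy, ← hSx, Finset.sum_mul_sum]
    apply Finset.sum_congr rfl
    intro j _
    apply Finset.sum_congr rfl
    intro i _
    rw [← Bialgebra.comul_mul, mul_antipode_lTensor_comul_apply, Bialgebra.counit_mul,
      Algebra.algebraMap_eq_smul_one, mul_smul_comm, mul_one, smul_mul_smul_comm]
    rw [mul_comm (counit (R := k) (q.right j))]
  have hB : X = antipode (R := k) (x * y) := by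
    have hterm : ∀ j ∈ q.index, ∀ i ∈ r.index,
        antipode (R := k) (q.left j) * antipode (R := k) (r.left i) *
          LinearMap.mul' k H ((antipode (R := k) (A := H)).lTensor H
            (comul (R := k) (r.right i) * comul (R := k) (q.right j)))
        = ∑ l ∈ (qq j).index, ∑ m ∈ (rr i).index,
            F3 (k := k) (antipode (R := k) (q.left j)) ((qq j).left l) ((qq j).right l)
              ((antipode (R := k) (r.left i) * (rr i).left m) ⊗ₜ[k] (rr i).right m) := by
      intro j _ i _
      rw [← (rr i).eq, ← (qq j).eq, Finset.sum_mul_sum]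
      simp only [Algebra.TensorProduct.tmul_mul_tmul, map_sum, LinearMap.lTensor_tmul,
        LinearMap.mul'_apply, Finset.mul_sum]
      rw [Finset.sum_comm]
      apply Finset.sum_congr rfl; intro l _
      apply Finset.sum_congr rfl; intro m _
      simp only [F3_tmul, mul_assoc]
    rw [hX, Finset.sum_congr rfl (fun j hj => Finset.sum_congr rfl (fun i hi => hterm j hj i hi))]
    have hswap : ∀ j ∈ q.index,
        (∑ i ∈ r.index, ∑ l ∈ (qq j).index, ∑ m ∈ (rr i).index,
          F3 (k := k) (antipode (R := k) (q.left j)) ((qq j).left l) ((qq j).right l)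
            ((antipode (R := k) (r.left i) * (rr i).left m) ⊗ₜ[k] (rr i).right m))
        = ∑ l ∈ (qq j).index, ∑ i ∈ r.index, ∑ m ∈ (rr i).index,
          F3 (k := k) (antipode (R := k) (q.left j)) ((qq j).left l) ((qq j).right l)
            ((antipode (R := k) (r.left i) * (rr i).left m) ⊗ₜ[k] (rr i).right m) :=
      fun j _ => Finset.sum_comm ..
    rw [Finset.sum_congr rfl hswap]
    have hinner : ∀ j ∈ q.index, ∀ l ∈ (qq j).index,
        (∑ i ∈ r.index, ∑ m ∈ (rr i).index,
          F3 (k := k) (antipode (R := k) (q.left j)) ((qq j).left l) ((qq j).right l)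
            ((antipode (R := k) (r.left i) * (rr i).left m) ⊗ₜ[k] (rr i).right m))
        = G3 (k := k) x ((antipode (R := k) (q.left j) * (qq j).left l) ⊗ₜ[k] (qq j).right l) := by
      intro j _ l _
      simp only [← map_sum]
      rw [dagger x r rr, F3_tmul, G3_tmul, mul_one, mul_assoc]
    rw [Finset.sum_congr rfl (fun j hj => Finset.sum_congr rfl (fun l hl => hinner j hj l hl))]
    simp only [← map_sum]
    rw [dagger y q qq, G3_tmul, one_mul]
  rw [← hA, hB]

end General

section Core3
variable (t : H) (hleft : ∀ h : H, h * t = counit (R := k) h • t)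

lemma eps_ww_sum : ∑ i, counit (R := k) (bb (k := k) (H := H) i) • ww (k := k) t i = t := by
  have h := congrArg (lapp (W := H) (counit (R := k))) (hz (k := k) t)
  rw [map_sum] at h
  simp only [lapp_tmul] at h
  rw [← h]
  simp [lapp, Coalgebra.rTensor_counit_comul]

include hleft

lemma integral_eq (ht : t ≠ 0) (lam : Module.Dual k H)
    (hlam : ∑ i, lam (bb i) • ww (k := k) t i = 1)
    (s : H) (hs : ∀ h : H, h * s = counit (R := k) h • s) :
    s = lam (antipode (R := k) s) • t := by
  have hSsurj : Function.Surjective (antipode (R := k) (A := H)) :=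
    LinearMap.injective_iff_surjective.mp (antipode_injective (k := k) t hleft ht)
  have hright : ∀ y : H, antipode (R := k) s * y = counit (R := k) y • antipode (R := k) s := by
    intro y
    obtain ⟨a, rfl⟩ := hSsurj y
    rw [← antipode_mul', hs, map_smul, _root_.counit_antipode]
  have hd := diamond (k := k) t hleft lam hlam s
  have heach : ∀ i, lam (antipode (R := k) s * bb i)
      = counit (R := k) (bb (k := k) (H := H) i) * lam (antipode (R := k) s) := by
    intro i
    rw [hright (bb i), map_smul, smul_eq_mul]
  calc s = ∑ i, lam (antipode (R := k) s * bb i) • ww (k := k) t i := hd.symm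
    _ = lam (antipode (R := k) s) • t := by
        simp_rw [heach, mul_comm, mul_smul]
        rw [← Finset.smul_sum, eps_ww_sum (k := k) t]

end Core3

/-- Let `H` be a finite dimensional Hopf algebra over a field and `t ≠ 0` a left
integral in `H` (`h·t = ε(h)·t` for all `h`). Then there is a unique algebra
homomorphism `α : H → k` (the distinguished group-like element of `H*`) with
`t·h = α(h)·t` for all `h`, and `t` is also a right integral (i.e. `H` is unimodular)
iff `α = ε`. -/
theorem distinguished_grouplike (k H : Type) [Field k] [Ring H] [HopfAlgebra k H]
    [FiniteDimensional k H] (t : H) (ht : t ≠ 0)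
    (hleft : ∀ h : H, h * t = Coalgebra.counit (R := k) h • t) :
    ∃ α : H →ₐ[k] k,
      (∀ h : H, t * h = α h • t) ∧
      (∀ β : H →ₐ[k] k, (∀ h : H, t * h = β h • t) → β = α) ∧
      ((∀ h : H, t * h = Coalgebra.counit (R := k) h • t) ↔
        ∀ h : H, α h = Coalgebra.counit (R := k) h) := by
  obtain ⟨lam, hlam⟩ := exists_lam (k := k) t hleft ht
  have hint : ∀ h h' : H, h' * (t * h) = counit (R := k) h' • (t * h) := by
    intro h h'
    rw [← mul_assoc, hleft, smul_mul_assoc]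
  set c : H → k := fun h => lam (antipode (R := k) (t * h)) with hcdef
  have hc : ∀ h : H, t * h = c h • t := fun h =>
    integral_eq (k := k) t hleft ht lam hlam (t * h) (hint h)
  have hinj : ∀ c₁ c₂ : k, c₁ • t = c₂ • t → c₁ = c₂ := fun c₁ c₂ hcc =>
    smul_left_injective k ht hcc
  have hadd : ∀ h h' : H, c (h + h') = c h + c h' := by
    intro h h'
    apply hinj
    rw [← hc, add_smul, ← hc, ← hc, mul_add]
  have hsmul : ∀ (a : k) (h : H), c (a • h) = a * c h := by
    intro a h
    apply hinj
    rw [← hc, mul_smul, ← hc, mul_smul_comm]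
  have hone : c 1 = 1 := by
    apply hinj
    rw [← hc, mul_one, one_smul]
  have hmul : ∀ h h' : H, c (h * h') = c h * c h' := by
    intro h h'
    apply hinj
    rw [← hc, ← mul_assoc, hc h, smul_mul_assoc, hc h', smul_smul]
  set αl : H →ₗ[k] k :=
    { toFun := c
      map_add' := hadd
      map_smul' := by intro a h; simp [hsmul a h] } with hαl
  set α : H →ₐ[k] k := AlgHom.ofLinearMap αl hone (fun h h' => hmul h h') with hαdef
  have hαc : ∀ h : H, α h = c h := fun _ => rfl
  refine ⟨α, fun h => by rw [hαc]; exact hc h, ?_, ?_⟩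
  · intro β hβ
    apply AlgHom.ext
    intro h
    apply hinj
    rw [← hβ h, hαc h, ← hc h]
  · constructor
    · intro hright h
      apply hinj
      rw [hαc h, ← hc h, hright h]
    · intro hα h
      rw [hc h, ← hαc h, hα h]
end

section
/- In the hyperalgebra of SL₂ over a field (or over Z), with divided powers X^{(m)}, X_{-}^{(n)} of the standard root vectors X = X_α, X₋ = X_{−α} and H = [X, X₋], the following commutation formula holds for all m, n ≥ 0: X^{(m)} X₋^{(n)} = Σ_{i=0}^{min(m,n)} X₋^{(n−i)} · C(H − m − n + 2i, i) · X^{(m−i)}, where C(H + c, i) denotes the divided-power binomial element (H+c)(H+c−1)⋯(H+c−i+1)/i! in the hyperalgebra. -/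
set_option linter.unusedSectionVars false

noncomputable def hBinom {A : Type*} [Ring A] [Algebra ℚ A] (H : A) (c : ℤ) (i : ℕ) : A :=
  (i.factorial : ℚ)⁻¹ • ((List.range i).map (fun j : ℕ => H + (c : A) - (j : A))).prod

namespace SL2Aux

variable {A : Type*} [Ring A] [Algebra ℚ A]

def PP (H : A) (c : ℤ) (i : ℕ) : A :=
  ((List.range i).map (fun j : ℕ => H + (c : A) - (j : A))).prod

lemma hBinom_eq (H : A) (c : ℤ) (i : ℕ) : hBinom H c i = (i.factorial : ℚ)⁻¹ • PP H c i := rfl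

@[simp] lemma PP_zero (H : A) (c : ℤ) : PP H c 0 = 1 := rfl

@[simp] lemma hBinom_zero (H : A) (c : ℤ) : hBinom H c 0 = 1 := by
  simp [hBinom_eq]

lemma PP_succ (H : A) (c : ℤ) (i : ℕ) :
    PP H c (i+1) = PP H c i * (H + (c:A) - (i:A)) := by
  simp [PP, List.range_succ]

lemma PP_succ' (H : A) (c : ℤ) (i : ℕ) :
    PP H c (i+1) = (H + (c:A)) * PP H (c-1) i := by
  rw [PP, List.range_succ_eq_map, List.map_cons, List.prod_cons, List.map_map]
  congr 2
  · simp
  · apply List.map_congr_left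
    intro j _
    simp only [Function.comp_apply, Nat.succ_eq_add_one]
    push_cast
    abel

lemma commute_PP {H d : A} (h : Commute d H) (c : ℤ) (i : ℕ) : Commute d (PP H c i) := by
  induction i with
  | zero => simp [Commute.one_right]
  | succ i ih =>
      rw [PP_succ]
      exact ih.mul_right ((h.add_right (Int.cast_commute c d).symm).sub_right
        (Nat.cast_commute i d).symm)

lemma commute_hBinom {H d : A} (h : Commute d H) (c : ℤ) (i : ℕ) : Commute d (hBinom H c i) := by
  rw [hBinom_eq]
  exact (commute_PP h c i).smul_right _

lemma cast_succ_mul (x : A) (i : ℕ) : ((i:A)+1) * x = ((i:ℚ)+1) • x := by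
  rw [Algebra.smul_def, map_add, map_natCast, map_one]

lemma PP_pascal (H : A) (c : ℤ) (i : ℕ) :
    PP H c (i+1) = PP H (c-1) (i+1) + ((i:A)+1) * PP H (c-1) i := by
  rw [PP_succ', PP_succ]
  have hcom : Commute (H + ((c-1:ℤ):A) - (i:A)) (PP H (c-1) i) :=
    commute_PP (((Commute.refl H).add_left (Int.cast_commute _ H)).sub_left
      (Nat.cast_commute i H)) _ _
  rw [← hcom.eq, ← add_mul]
  congr 1
  push_cast
  abel

/-- Pascal's rule: `C(x, i+1) = C(x-1, i+1) + C(x-1, i)`. -/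
lemma pascal1 (H : A) (c : ℤ) (i : ℕ) :
    hBinom H c (i+1) = hBinom H (c-1) (i+1) + hBinom H (c-1) i := by
  rw [hBinom_eq, hBinom_eq, hBinom_eq, PP_pascal,
    cast_succ_mul (PP H (c-1) i) i]
  match_scalars
  all_goals (try ring)
  all_goals
    have h1 : ((i).factorial : ℚ) ≠ 0 := Nat.cast_ne_zero.mpr (Nat.factorial_ne_zero _)
    rw [Nat.add_comm 1 i, Nat.factorial_succ]
    push_cast
    field_simp
    try ring
    try simp

/-- `(H + c - i) * C(H+c, i) = (i+1) • C(H+c, i+1)`. -/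
lemma pascal2 (H : A) (c : ℤ) (i : ℕ) :
    (H + (c:A) - (i:A)) * hBinom H c i = ((i:ℚ)+1) • hBinom H c (i+1) := by
  have hcom : Commute (H + (c:A) - (i:A)) (PP H c i) :=
    commute_PP (((Commute.refl H).add_left (Int.cast_commute _ H)).sub_left
      (Nat.cast_commute i H)) _ _
  rw [hBinom_eq, hBinom_eq, PP_succ, mul_smul_comm, hcom.eq]
  rw [smul_smul]
  congr 1
  have h1 : ((i).factorial : ℚ) ≠ 0 := Nat.cast_ne_zero.mpr (Nat.factorial_ne_zero _)
  rw [Nat.factorial_succ]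
  push_cast
  field_simp
  try ring


lemma intCast_mul_eq (c : ℤ) (x : A) : (c:A) * x = ((c:ℚ)) • x := by
  rw [Algebra.smul_def, map_intCast]

lemma natCast_mul_eq (k : ℕ) (x : A) : (k:A) * x = ((k:ℚ)) • x := by
  rw [Algebra.smul_def, map_natCast]

/-- `H·C(H+c,i) = (i+1)·C(H+c+1,i+1) − (c+1)·C(H+c,i)`. -/
lemma H_mul_hBinom (H : A) (c : ℤ) (i : ℕ) :
    H * hBinom H c i =
      ((i:ℚ)+1) • hBinom H (c+1) (i+1) - ((c:ℚ)+1) • hBinom H c i := by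
  have p2 := pascal2 H c i
  rw [sub_mul, add_mul, intCast_mul_eq, natCast_mul_eq] at p2
  have p1 := pascal1 H (c+1) i
  rw [show c+1-1 = c by ring] at p1
  linear_combination (norm := module) p2 - ((i:ℚ)+1) • p1

section Rel

variable {X Xm H : A}

lemma X_mul_PP (h2 : H * X - X * H = 2 * X) (c : ℤ) (i : ℕ) :
    X * PP H c i = PP H (c-2) i * X := by
  have hXH : X * H = H * X - 2 * X := by rw [← h2]; noncomm_ring
  induction i with
  | zero => simp
  | succ i ih =>
      have hx : X * (H + (c:A) - (i:A)) = (H + ((c-2:ℤ):A) - (i:A)) * X := by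
        push_cast
        rw [mul_sub, mul_add, hXH, ← (Int.cast_commute c X).eq,
          ← (Nat.cast_commute i X).eq]
        simp only [sub_mul, add_mul]
        abel
      rw [PP_succ, PP_succ, ← mul_assoc, ih, mul_assoc, hx, ← mul_assoc]

lemma X_mul_hBinom (h2 : H * X - X * H = 2 * X) (c : ℤ) (i : ℕ) :
    X * hBinom H c i = hBinom H (c-2) i * X := by
  rw [hBinom_eq, hBinom_eq, mul_smul_comm, X_mul_PP h2, smul_mul_assoc]

/-- `X·X₋^k = X₋^k·X + k·X₋^(k-1)·H − k(k−1)·X₋^(k-1)`. -/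
lemma X_mul_Xm_pow (h1 : X * Xm - Xm * X = H) (h3 : H * Xm - Xm * H = -(2 * Xm)) :
    ∀ k : ℕ, X * Xm^k = Xm^k * X + (k:ℚ) • (Xm^(k-1) * H)
      - ((k:ℚ) * ((k:ℚ) - 1)) • Xm^(k-1) := by
  have hXXm : X * Xm = Xm * X + H := by linear_combination (norm := noncomm_ring) h1
  have hHXm : H * Xm = Xm * H - (2:ℚ) • Xm := by
    have h2s : (2:ℚ) • Xm = 2 * Xm := by
      rw [Algebra.smul_def, map_ofNat]
    rw [h2s]
    linear_combination (norm := noncomm_ring) h3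
  intro k
  induction k with
  | zero => simp
  | succ k ih =>
      cases k with
      | zero => simpa using hXXm
      | succ j =>
          simp only [Nat.add_sub_cancel] at ih ⊢
          rw [pow_succ Xm (j+1), ← mul_assoc, ih]
          simp only [sub_mul, add_mul, smul_mul_assoc, mul_assoc]
          rw [hXXm, hHXm]
          simp only [mul_add, mul_sub, mul_smul_comm, ← mul_assoc, ← pow_succ]
          push_cast
          module

end Rel

/-- Coefficient `C(m,i)·C(n,i)·(i!)²`. -/
def aco (m n i : ℕ) : ℚ := (m.choose i) * (n.choose i) * ((i.factorial : ℚ))^2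

def cc (m n i : ℕ) : ℤ := -(m : ℤ) - (n : ℤ) + 2 * (i : ℤ)

lemma cc_cast (m n i : ℕ) : ((cc m n i : ℤ) : ℚ) = -(m:ℚ) - (n:ℚ) + 2*(i:ℚ) := by
  unfold cc; push_cast; ring

lemma chooseQ (k i : ℕ) :
    ((k.choose (i+1)):ℚ) * ((i:ℚ)+1) = (k.choose i) * ((k:ℚ) - i) := by
  rcases le_or_gt i k with h | h
  · have h1 : ((k.choose (i+1) * (i+1) : ℕ) : ℚ) = ((k.choose i * (k-i) : ℕ) : ℚ) := by
      rw [Nat.choose_succ_right_eq]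
    push_cast [Nat.cast_sub h] at h1
    linarith [h1]
  · rw [Nat.choose_eq_zero_of_lt h, Nat.choose_eq_zero_of_lt (Nat.lt_succ_of_lt h)]
    simp

lemma aco_succ (m n i : ℕ) :
    aco m n (i+1) = aco m n i * (((n-i:ℕ)):ℚ) * ((m:ℚ) - i) := by
  rcases le_or_gt i n with h | h
  · have e1 := chooseQ m i
    have e2 := chooseQ n i
    unfold aco
    rw [Nat.cast_sub h, Nat.factorial_succ]
    push_cast
    linear_combination e1 * ((n.choose (i+1):ℚ) * ((i:ℚ)+1) * ((i.factorial:ℚ))^2)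
      + e2 * ((m.choose i:ℚ) * ((m:ℚ)-(i:ℚ)) * ((i.factorial:ℚ))^2)
  · unfold aco
    rw [Nat.choose_eq_zero_of_lt h, Nat.choose_eq_zero_of_lt (Nat.lt_succ_of_lt h)]
    simp

lemma coef1 (m n i : ℕ) (h : i ≤ n) :
    aco (m+1) n (i+1) - aco m n (i+1) = aco m n i * (((n-i:ℕ)):ℚ) * ((i:ℚ)+1) := by
  unfold aco
  rw [Nat.choose_succ_succ m i, Nat.cast_sub h, Nat.factorial_succ]
  have e2 := chooseQ n i
  push_cast
  linear_combination e2 * ((m.choose i:ℚ) * ((i:ℚ)+1) * ((i.factorial:ℚ))^2)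

lemma aco_zero_left (m n i : ℕ) (h : m < i) : aco m n i = 0 := by
  simp [aco, Nat.choose_eq_zero_of_lt h]

lemma aco_zero_right (m n i : ℕ) (h : n < i) : aco m n i = 0 := by
  simp [aco, Nat.choose_eq_zero_of_lt h]

section Main

variable (X Xm H : A)

noncomputable def Tf (m n i : ℕ) : A := aco m n i • (Xm^(n-i) * (hBinom H (cc m n i) i * X^(m-i)))
noncomputable def Pf (m n i : ℕ) : A := aco m n i • (Xm^(n-i) * (hBinom H (cc m n i - 2) i * X^((m-i)+1)))
noncomputable def Gf (m n i : ℕ) : A := aco m n i • (Xm^(n-i) * (hBinom H (cc m n i - 1) i * X^((m-i)+1)))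
noncomputable def Ef (m n i : ℕ) : A := aco m n i • (Xm^(n-i) * (hBinom H (cc m n i - 2) (i-1) * X^((m-i)+1)))
noncomputable def Sf (m n i : ℕ) : A :=
  (aco (m+1) n i - aco m n i) • (Xm^(n-i) * (hBinom H (cc (m+1) n i) i * X^(m+1-i)))
noncomputable def Q1f (m n i : ℕ) : A :=
  (aco m n i * ((n-i:ℕ):ℚ) * ((i:ℚ)+1)) •
    (Xm^(n-i-1) * (hBinom H (cc m n i + 1) (i+1) * X^(m-i)))
noncomputable def Q2f (m n i : ℕ) : A :=
  (aco m n i * ((n-i:ℕ):ℚ) * ((m:ℚ)-(i:ℚ))) •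
    (Xm^(n-i-1) * (hBinom H (cc m n i) i * X^(m-i)))

variable {X Xm H}

lemma termA (h1 : X * Xm - Xm * X = H) (h2 : H * X - X * H = 2 * X)
    (h3 : H * Xm - Xm * H = -(2 * Xm)) (m n i : ℕ) (hin : i ≤ n) :
    X * (Xm^(n-i) * (hBinom H (cc m n i) i * X^(m-i))) =
      Xm^(n-i) * (hBinom H (cc m n i - 2) i * X^((m-i)+1))
      + (((n-i:ℕ):ℚ) * ((i:ℚ)+1)) •
          (Xm^(n-i-1) * (hBinom H (cc m n i + 1) (i+1) * X^(m-i)))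
      + (((n-i:ℕ):ℚ) * ((m:ℚ)-(i:ℚ))) •
          (Xm^(n-i-1) * (hBinom H (cc m n i) i * X^(m-i))) := by
  rw [← mul_assoc, X_mul_Xm_pow h1 h3 (n-i)]
  simp only [sub_mul, add_mul, smul_mul_assoc]
  rw [mul_assoc (Xm^(n-i)) X _, ← mul_assoc X _ (X^(m-i)), X_mul_hBinom h2,
      mul_assoc _ X (X^(m-i)), ← pow_succ' X (m-i)]
  rw [mul_assoc (Xm^(n-i-1)) H _, ← mul_assoc H _ (X^(m-i)), H_mul_hBinom,
      sub_mul, smul_mul_assoc, smul_mul_assoc, mul_sub, mul_smul_comm, mul_smul_comm]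
  rw [Nat.cast_sub hin, cc_cast]
  module

lemma LT (h1 : X * Xm - Xm * X = H) (h2 : H * X - X * H = 2 * X)
    (h3 : H * Xm - Xm * H = -(2 * Xm)) (m n i : ℕ) (hin : i ≤ n) :
    X * Tf X Xm H m n i = Pf X Xm H m n i + Q1f X Xm H m n i + Q2f X Xm H m n i := by
  unfold Tf Pf Q1f Q2f
  rw [mul_smul_comm, termA h1 h2 h3 m n i hin]
  module


lemma LQ1 (m n i : ℕ) (hin : i ≤ n) : Q1f X Xm H m n i = Sf X Xm H m n (i+1) := by
  unfold Q1f Sf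
  rw [← coef1 m n i hin,
    show n - i - 1 = n - (i+1) by omega,
    show m - i = m+1 - (i+1) by omega,
    show cc m n i + 1 = cc (m+1) n (i+1) by unfold cc; push_cast; ring]

lemma LQ2 (m n i : ℕ) : Q2f X Xm H m n i = Ef X Xm H m n (i+1) := by
  unfold Q2f Ef
  rw [← aco_succ, show cc m n (i+1) - 2 = cc m n i by unfold cc; push_cast; ring]
  simp only [Nat.add_sub_cancel]
  rw [show n - i - 1 = n - (i+1) by omega]
  rcases lt_or_ge i m with h | h
  · rw [show (m-(i+1))+1 = m - i by omega]
  · rw [show aco m n (i+1) = 0 from aco_zero_left _ _ _ (by omega), zero_smul, zero_smul]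

lemma LPE (m n i : ℕ) : Pf X Xm H m n (i+1) + Ef X Xm H m n (i+1) = Gf X Xm H m n (i+1) := by
  unfold Pf Ef Gf
  simp only [Nat.add_sub_cancel]
  have p1 := pascal1 H (cc m n (i+1) - 1) i
  rw [show cc m n (i+1) - 1 - 1 = cc m n (i+1) - 2 by ring] at p1
  rw [p1, add_mul, mul_add, smul_add]

lemma LP0 (m n : ℕ) : Pf X Xm H m n 0 = Gf X Xm H m n 0 := by
  unfold Pf Gf; simp

lemma LE0 (m n : ℕ) : Ef X Xm H m n 0 = Pf X Xm H m n 0 := rfl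

lemma LGS (m n i : ℕ) : Gf X Xm H m n i + Sf X Xm H m n i = Tf X Xm H (m+1) n i := by
  unfold Gf Sf Tf
  rw [show cc m n i - 1 = cc (m+1) n i by unfold cc; push_cast; ring]
  rcases le_or_gt i m with h | h
  · rw [show (m-i)+1 = m+1-i by omega]
    module
  · rw [aco_zero_left _ _ _ h, zero_smul, zero_add, sub_zero]

lemma LS0 (m n : ℕ) : Sf X Xm H m n 0 = 0 := by
  unfold Sf; simp [aco]

lemma LSn (m n : ℕ) : Sf X Xm H m n (n+1) = 0 := by
  unfold Sf
  rw [aco_zero_right _ _ _ (Nat.lt_succ_self n), aco_zero_right _ _ _ (Nat.lt_succ_self n),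
    sub_self, zero_smul]

lemma LEn (m n : ℕ) : Ef X Xm H m n (n+1) = 0 := by
  unfold Ef
  rw [aco_zero_right _ _ _ (Nat.lt_succ_self n), zero_smul]

lemma key (h1 : X * Xm - Xm * X = H) (h2 : H * X - X * H = 2 * X)
    (h3 : H * Xm - Xm * H = -(2 * Xm)) (n : ℕ) :
    ∀ m : ℕ, X^m * Xm^n = ∑ i ∈ Finset.range (n+1), Tf X Xm H m n i := by
  intro m
  induction m with
  | zero =>
      rw [pow_zero, one_mul, Finset.sum_range_succ']
      have hz : ∀ i ∈ Finset.range n, Tf X Xm H 0 n (i+1) = 0 := by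
        intro i _
        unfold Tf
        rw [aco_zero_left _ _ _ (Nat.succ_pos i), zero_smul]
      rw [Finset.sum_congr rfl hz, Finset.sum_const, smul_zero, zero_add]
      unfold Tf
      simp [aco, cc]
  | succ m ih =>
      have step1 : X^(m+1) * Xm^n = X * (X^m * Xm^n) := by rw [pow_succ', mul_assoc]
      rw [step1, ih, Finset.mul_sum]
      rw [Finset.sum_congr rfl (fun i hi =>
        LT h1 h2 h3 m n i (Nat.lt_succ_iff.mp (Finset.mem_range.mp hi)))]
      rw [Finset.sum_add_distrib, Finset.sum_add_distrib]
      have hQ1 : ∑ i ∈ Finset.range (n+1), Q1f X Xm H m n i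
          = ∑ i ∈ Finset.range (n+1), Sf X Xm H m n i := by
        rw [Finset.sum_congr rfl (fun i hi =>
          LQ1 m n i (Nat.lt_succ_iff.mp (Finset.mem_range.mp hi)))]
        have e1 := Finset.sum_range_succ' (fun i => Sf X Xm H m n i) (n+1)
        have e2 := Finset.sum_range_succ (fun i => Sf X Xm H m n i) (n+1)
        rw [LS0, add_zero] at e1
        rw [LSn, add_zero] at e2
        rw [← e1, e2]
      have hQ2 : ∑ i ∈ Finset.range (n+1), Q2f X Xm H m n i
          = ∑ i ∈ Finset.range (n+1), Ef X Xm H m n i - Ef X Xm H m n 0 := by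
        rw [Finset.sum_congr rfl (fun i _ => LQ2 m n i)]
        have e1 := Finset.sum_range_succ' (fun i => Ef X Xm H m n i) (n+1)
        have e2 := Finset.sum_range_succ (fun i => Ef X Xm H m n i) (n+1)
        rw [LEn, add_zero] at e2
        rw [e2] at e1
        rw [eq_sub_iff_add_eq]
        exact e1.symm
      rw [hQ1, hQ2]
      have hPE : ∑ i ∈ Finset.range (n+1), Pf X Xm H m n i
          + (∑ i ∈ Finset.range (n+1), Ef X Xm H m n i - Ef X Xm H m n 0)
          = ∑ i ∈ Finset.range (n+1), Gf X Xm H m n i := by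
        rw [Finset.sum_range_succ' (fun i => Pf X Xm H m n i) n,
          Finset.sum_range_succ' (fun i => Ef X Xm H m n i) n,
          Finset.sum_range_succ' (fun i => Gf X Xm H m n i) n, LE0, LP0]
        have hmid : ∑ i ∈ Finset.range n, Pf X Xm H m n (i+1)
            + ∑ i ∈ Finset.range n, Ef X Xm H m n (i+1)
            = ∑ i ∈ Finset.range n, Gf X Xm H m n (i+1) := by
          rw [← Finset.sum_add_distrib]
          exact Finset.sum_congr rfl (fun i _ => LPE m n i)
        rw [← hmid]
        abel
      have hGS : ∑ i ∈ Finset.range (n+1), Gf X Xm H m n i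
          + ∑ i ∈ Finset.range (n+1), Sf X Xm H m n i
          = ∑ i ∈ Finset.range (n+1), Tf X Xm H (m+1) n i := by
        rw [← Finset.sum_add_distrib]
        exact Finset.sum_congr rfl (fun i _ => LGS m n i)
      rw [← hGS, ← hPE]
      abel

lemma scal (m n i : ℕ) (him : i ≤ m) (hin : i ≤ n) :
    (m.factorial:ℚ)⁻¹ * (n.factorial:ℚ)⁻¹ * aco m n i
      = ((n-i).factorial:ℚ)⁻¹ * ((m-i).factorial:ℚ)⁻¹ := by
  have em : ((m.choose i : ℚ)) * (i.factorial:ℚ) * (((m-i).factorial:ℚ)) = (m.factorial:ℚ) := by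
    exact_mod_cast congrArg (Nat.cast (R:=ℚ)) (Nat.choose_mul_factorial_mul_factorial him)
  have en : ((n.choose i : ℚ)) * (i.factorial:ℚ) * (((n-i).factorial:ℚ)) = (n.factorial:ℚ) := by
    exact_mod_cast congrArg (Nat.cast (R:=ℚ)) (Nat.choose_mul_factorial_mul_factorial hin)
  have hCm : ((m.choose i : ℚ)) ≠ 0 := by
    exact_mod_cast Nat.pos_iff_ne_zero.mp (Nat.choose_pos him)
  have hCn : ((n.choose i : ℚ)) ≠ 0 := by
    exact_mod_cast Nat.pos_iff_ne_zero.mp (Nat.choose_pos hin)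
  have hfi : ((i.factorial : ℚ)) ≠ 0 := Nat.cast_ne_zero.mpr (Nat.factorial_ne_zero _)
  have hfm : (((m-i).factorial : ℚ)) ≠ 0 := Nat.cast_ne_zero.mpr (Nat.factorial_ne_zero _)
  have hfn : (((n-i).factorial : ℚ)) ≠ 0 := Nat.cast_ne_zero.mpr (Nat.factorial_ne_zero _)
  unfold aco
  rw [← em, ← en]
  field_simp

end Main

end SL2Aux

/-- Commutation formula in the hyperalgebra of `SL₂`: for divided powers
`X^{(m)} = X^m/m!`, `X₋^{(n)} = X₋^n/n!` of a standard `sl₂`-triple `(X, X₋, H)`,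
`X^{(m)} X₋^{(n)} = Σ_{i=0}^{min(m,n)} X₋^{(n−i)} C(H − m − n + 2i, i) X^{(m−i)}`. -/
theorem sl2_divided_power_commutation (A : Type*) [Ring A] [Algebra ℚ A]
    (X Xm H : A)
    (h1 : X * Xm - Xm * X = H)
    (h2 : H * X - X * H = 2 * X)
    (h3 : H * Xm - Xm * H = -(2 * Xm))
    (m n : ℕ) :
    ((m.factorial : ℚ)⁻¹ • X ^ m) * ((n.factorial : ℚ)⁻¹ • Xm ^ n) =
      ∑ i ∈ Finset.range (min m n + 1),
        (((n - i).factorial : ℚ)⁻¹ • Xm ^ (n - i)) *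
          hBinom H (-(m : ℤ) - (n : ℤ) + 2 * (i : ℤ)) i *
          (((m - i).factorial : ℚ)⁻¹ • X ^ (m - i)) := by
  classical
  have k := SL2Aux.key h1 h2 h3 n m
  have hss : ∀ i : ℕ,
      (((n - i).factorial : ℚ)⁻¹ • Xm ^ (n - i)) *
        hBinom H (-(m : ℤ) - (n : ℤ) + 2 * (i : ℤ)) i *
        (((m - i).factorial : ℚ)⁻¹ • X ^ (m - i))
      = (((n-i).factorial:ℚ)⁻¹ * ((m-i).factorial:ℚ)⁻¹) •
          (Xm^(n-i) * (hBinom H (SL2Aux.cc m n i) i * X^(m-i))) := by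
    intro i
    show _ = (((n-i).factorial:ℚ)⁻¹ * ((m-i).factorial:ℚ)⁻¹) •
      (Xm^(n-i) * (hBinom H (-(m : ℤ) - (n : ℤ) + 2 * (i : ℤ)) i * X^(m-i)))
    rw [smul_mul_assoc, smul_mul_assoc, mul_smul_comm, smul_smul, mul_assoc]
  calc ((m.factorial : ℚ)⁻¹ • X ^ m) * ((n.factorial : ℚ)⁻¹ • Xm ^ n)
      = ((m.factorial:ℚ)⁻¹ * (n.factorial:ℚ)⁻¹) • (X^m * Xm^n) := by
        rw [smul_mul_assoc, mul_smul_comm, smul_smul]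
    _ = ∑ i ∈ Finset.range (n+1),
          ((m.factorial:ℚ)⁻¹ * (n.factorial:ℚ)⁻¹ * SL2Aux.aco m n i) •
            (Xm^(n-i) * (hBinom H (SL2Aux.cc m n i) i * X^(m-i))) := by
        rw [k, Finset.smul_sum]
        refine Finset.sum_congr rfl fun i _ => ?_
        unfold SL2Aux.Tf
        rw [smul_smul]
    _ = ∑ i ∈ Finset.range (min m n + 1),
          ((m.factorial:ℚ)⁻¹ * (n.factorial:ℚ)⁻¹ * SL2Aux.aco m n i) •
            (Xm^(n-i) * (hBinom H (SL2Aux.cc m n i) i * X^(m-i))) := by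
        refine (Finset.sum_subset ?_ ?_).symm
        · intro x hx
          simp only [Finset.mem_range] at hx ⊢
          omega
        · intro x hx hnx
          simp only [Finset.mem_range] at hx hnx
          have hmx : m < x := by omega
          rw [SL2Aux.aco_zero_left _ _ _ hmx, mul_zero, zero_smul]
    _ = ∑ i ∈ Finset.range (min m n + 1),
          (((n - i).factorial : ℚ)⁻¹ • Xm ^ (n - i)) *
            hBinom H (-(m : ℤ) - (n : ℤ) + 2 * (i : ℤ)) i *
            (((m - i).factorial : ℚ)⁻¹ • X ^ (m - i)) := by
        refine Finset.sum_congr rfl fun i hi => ?_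
        simp only [Finset.mem_range] at hi
        rw [hss i, SL2Aux.scal m n i (by omega) (by omega)]
end
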